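/- Let L be a width-w decision list of size m on n variables in which every index is useful. Then for any i ∈ [m] and β ∈ (0,1): p_L(i) ≤ q_L(1-β, i)^{(1+β)/(2β)}. -/

import Mathlib

/-!
Let `A` be the set of inputs reaching rule `i`, of density `p`. Index `i` is useful in `L↾ρ`
exactly when some completion of `ρ` lies in `A`, so it suffices that for every `A ⊆ {0,1}ⁿ`,
star probability `α < 1` and exponent `c ∈ [1 - α, 1]`, a restriction `ρ ~ U(n, α)` hits `A`
with probability at least `dens(A)ᶜ`. This goes by induction on `n`, conditioning on the first
coordinate of `ρ`: a fixed bit `b` leaves the slice of `A` over `b`, a star leaves the projection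
of `A`, which contains both slices. The induction step is then the scalar inequality
`((p₀ + p₁) / 2)ᶜ ≤ α · max(p₀, p₁)ᶜ + (1 - α) / 2 · (p₀ᶜ + p₁ᶜ)`, which reduces to Bernoulli's
inequality and `t ≤ tᶜ` on `[0, 1]`. Take `α = 1 - β` and `c = 2β / (1 + β)`.
-/

open Finset
open scoped Classical BigOperators

noncomputable section

/-- A term over `n` Boolean variables, given as a partial assignment:
`C i = some b` means the literal `x i = b` appears in the term. -/
abbrev Term (n : ℕ) := Fin n → Option Bool

/-- Satisfaction of a term by an assignment. -/
def TermSat {n : ℕ} (C : Term n) (x : Fin n → Bool) : Prop :=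
  ∀ i b, C i = some b → x i = b

/-- Width of a term: the number of variables it mentions. -/
def termWidth {n : ℕ} (C : Term n) : ℕ :=
  (Finset.univ.filter fun i => C i ≠ none).card

/-- The index function of a decision list with terms `C`:
the first index whose term is satisfied by `x` (and `m` conventionally if none,
since `sInf ∅ = 0`; the default rule hypothesis makes the set nonempty). -/
def DLind {n m : ℕ} (C : Fin m → Term n) (x : Fin n → Bool) : ℕ :=
  sInf {i : ℕ | ∃ h : i < m, TermSat (C ⟨i, h⟩) x}

/-- Evaluation of a decision list with terms `C` and values `v`. -/
def DLeval {n m : ℕ} {V : Type} [Inhabited V] (C : Fin m → Term n)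
    (v : Fin m → V) (x : Fin n → Bool) : V :=
  if h : DLind C x < m then v ⟨DLind C x, h⟩ else default

/-- Probability of an event under the uniform distribution on `{0,1}^n`. -/
def pr (n : ℕ) (P : (Fin n → Bool) → Prop) : ℝ :=
  ((Finset.univ.filter P).card : ℝ) / 2 ^ n

/-- Hit probability of index `i` in the decision list with terms `C`. -/
def pL {n m : ℕ} (C : Fin m → Term n) (i : ℕ) : ℝ :=
  pr n fun x => DLind C x = i

/-- The index function of the sub-decision-list `L|_J`. -/
def DLindSub {n m : ℕ} (C : Fin m → Term n) (J : Finset (Fin m)) (x : Fin n → Bool) : ℕ :=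
  sInf {i : ℕ | ∃ h : i < m, (⟨i, h⟩ : Fin m) ∈ J ∧ TermSat (C ⟨i, h⟩) x}

/-- Evaluation of the sub-decision-list `L|_J`. -/
def DLevalSub {n m : ℕ} {V : Type} [Inhabited V] (C : Fin m → Term n) (v : Fin m → V)
    (J : Finset (Fin m)) (x : Fin n → Bool) : V :=
  if h : DLindSub C J x < m then v ⟨DLindSub C J x, h⟩ else default

/-- A restriction: `some b` fixes a coordinate to `b`, `none` is a star. -/
abbrev Restriction (n : ℕ) := Fin n → Option Bool

/-- `x` is a completion of the restriction `ρ`. -/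
def Compatible {n : ℕ} (ρ : Restriction n) (x : Fin n → Bool) : Prop :=
  ∀ i b, ρ i = some b → x i = b

/-- Number of stars of a restriction. -/
def stars {n : ℕ} (ρ : Restriction n) : ℕ :=
  (Finset.univ.filter fun i => ρ i = none).card

/-- Weight of a restriction under the product distribution `U(n, α)`:
each coordinate independently `*` with probability `α`, and `0` or `1`
each with probability `(1-α)/2`. -/
def restW {n : ℕ} (α : ℝ) (ρ : Restriction n) : ℝ :=
  ∏ i : Fin n, if ρ i = none then α else (1 - α) / 2

/-- Index `i` is useful in the restricted decision list `L↾ρ`: some completion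
of `ρ` hits rule `i`. -/
def Useful {n m : ℕ} (C : Fin m → Term n) (ρ : Restriction n) (i : Fin m) : Prop :=
  ∃ x, Compatible ρ x ∧ DLind C x = i.val

/-- Number of useful indices of `L↾ρ`. -/
def useNum {n m : ℕ} (C : Fin m → Term n) (ρ : Restriction n) : ℕ :=
  (Finset.univ.filter fun i : Fin m => Useful C ρ i).card

/-- `q_L(α, i)`: probability over `ρ ~ U(n, α)` that index `i` is useful in `L↾ρ`. -/
def qL {n m : ℕ} (C : Fin m → Term n) (α : ℝ) (i : Fin m) : ℝ :=
  ∑ ρ : Restriction n, restW α ρ * (if Useful C ρ i then 1 else 0)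

/-- Transition weight of the `β`-noise on a single bit. -/
def noiseW (β : ℝ) (a b : Bool) : ℝ := if a = b then (1 + β) / 2 else (1 - β) / 2

/-- Joint density of `(x, y)` where `x` is uniform and `y ~ N_β(x)`. -/
def pairW {n : ℕ} (β : ℝ) (x y : Fin n → Bool) : ℝ :=
  (1 / 2) ^ n * ∏ i : Fin n, noiseW β (x i) (y i)

/-- `Stab_L(β, i) = Pr[Ind L(x) = Ind L(y) = i]` for `x` uniform, `y ~ N_β(x)`. -/
def StabInd {n m : ℕ} (C : Fin m → Term n) (β : ℝ) (i : Fin m) : ℝ :=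
  ∑ x : Fin n → Bool, ∑ y : Fin n → Bool,
    pairW β x y * (if DLind C x = i.val ∧ DLind C y = i.val then 1 else 0)

/-- `Stab_β(g) = Pr[g(x) = g(y) = 1]` for `x` uniform, `y ~ N_β(x)`. -/
def stab {n : ℕ} (β : ℝ) (g : (Fin n → Bool) → Bool) : ℝ :=
  ∑ x : Fin n → Bool, ∑ y : Fin n → Bool,
    pairW β x y * (if g x = true ∧ g y = true then 1 else 0)

/-- Probability weight that a uniform completion of `ρ` equals `x`. -/
def compW {n : ℕ} (ρ : Restriction n) (x : Fin n → Bool) : ℝ :=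
  if Compatible ρ x then (1 / 2) ^ stars ρ else 0

/-- Evaluation of a DNF with terms `T`. -/
def DNFeval {n M : ℕ} (T : Fin M → Term n) (x : Fin n → Bool) : Prop :=
  ∃ t, TermSat (T t) x

def Hits {n : ℕ} (A : Finset (Fin n → Bool)) (ρ : Restriction n) : Prop :=
  ∃ x ∈ A, Compatible ρ x

def hitProb (n : ℕ) (α : ℝ) (A : Finset (Fin n → Bool)) : ℝ :=
  ∑ ρ : Restriction n, restW α ρ * if Hits A ρ then 1 else 0

def headSlice {n : ℕ} (b : Bool) (A : Finset (Fin (n + 1) → Bool)) : Finset (Fin n → Bool) :=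
  (A.filter (· 0 = b)).image Fin.tail

lemma sum_pi_fin_succ {β M : Type*} [Fintype β] [AddCommMonoid M] {n : ℕ}
    (f : (Fin (n + 1) → β) → M) :
    ∑ x, f x = ∑ b, ∑ y : Fin n → β, f (Fin.cons b y) := by
  rw [← (Fin.consEquiv fun _ => β).sum_comp f, Fintype.sum_prod_type]
  rfl

lemma compatible_cons_iff {n : ℕ} {o : Option Bool} {ρ : Restriction n}
    {x : Fin (n + 1) → Bool} :
    Compatible (Fin.cons o ρ) x ↔ (∀ b, o = some b → x 0 = b) ∧ Compatible ρ (Fin.tail x) := by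
  simp [Compatible, Fin.forall_fin_succ, Fin.tail]

lemma hits_cons_none {n : ℕ} {A : Finset (Fin (n + 1) → Bool)} {ρ : Restriction n} :
    Hits A (Fin.cons none ρ) ↔ Hits (A.image Fin.tail) ρ := by
  simp [Hits, compatible_cons_iff]

lemma hits_cons_some {n : ℕ} {A : Finset (Fin (n + 1) → Bool)} {ρ : Restriction n} {b : Bool} :
    Hits A (Fin.cons (some b) ρ) ↔ Hits (headSlice b A) ρ := by
  simp [Hits, headSlice, compatible_cons_iff, and_assoc]

lemma card_headSlice {n : ℕ} (b : Bool) (A : Finset (Fin (n + 1) → Bool)) :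
    (headSlice b A).card = (A.filter (· 0 = b)).card := by
  refine card_image_of_injOn fun x hx y hy hxy => ?_
  rw [← Fin.cons_self_tail x, ← Fin.cons_self_tail y, hxy,
    (mem_filter.1 hx).2, (mem_filter.1 hy).2]

lemma card_eq_card_headSlice_add {n : ℕ} (A : Finset (Fin (n + 1) → Bool)) :
    A.card = (headSlice false A).card + (headSlice true A).card := by
  rw [card_headSlice, card_headSlice, ← card_filter_add_card_filter_not (s := A) (· 0 = true)]
  simp [Nat.add_comm]

lemma headSlice_subset_image_tail {n : ℕ} (b : Bool) (A : Finset (Fin (n + 1) → Bool)) :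
    headSlice b A ⊆ A.image Fin.tail :=
  image_subset_image (filter_subset _ _)

lemma restW_nonneg {n : ℕ} {α : ℝ} (hα0 : 0 ≤ α) (hα1 : α ≤ 1) (ρ : Restriction n) :
    0 ≤ restW α ρ :=
  prod_nonneg fun _ _ => by split_ifs <;> linarith

lemma restW_cons {n : ℕ} (α : ℝ) (o : Option Bool) (ρ : Restriction n) :
    restW α (Fin.cons o ρ) = (if o = none then α else (1 - α) / 2) * restW α ρ := by
  simp only [restW, Fin.prod_univ_succ, Fin.cons_zero, Fin.cons_succ]

lemma hitProb_nonneg {n : ℕ} {α : ℝ} (hα0 : 0 ≤ α) (hα1 : α ≤ 1) (A : Finset (Fin n → Bool)) :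
    0 ≤ hitProb n α A :=
  sum_nonneg fun ρ _ => mul_nonneg (restW_nonneg hα0 hα1 ρ) (by split_ifs <;> norm_num)

lemma hitProb_mono {n : ℕ} {α : ℝ} (hα0 : 0 ≤ α) (hα1 : α ≤ 1) {A B : Finset (Fin n → Bool)}
    (hAB : A ⊆ B) : hitProb n α A ≤ hitProb n α B := by
  refine sum_le_sum fun ρ _ => mul_le_mul_of_nonneg_left ?_ (restW_nonneg hα0 hα1 ρ)
  by_cases hA : Hits A ρ
  · obtain ⟨x, hx, hρx⟩ := hA
    rw [if_pos ⟨x, hx, hρx⟩, if_pos ⟨x, hAB hx, hρx⟩]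
  · rw [if_neg hA]
    split_ifs <;> norm_num

lemma hitProb_zero {α : ℝ} {A : Finset (Fin 0 → Bool)} (hA : A.Nonempty) : hitProb 0 α A = 1 := by
  obtain ⟨x, hx⟩ := hA
  have hits : ∀ ρ, Hits A ρ := fun ρ => ⟨x, hx, fun j => j.elim0⟩
  simp [hitProb, restW, hits]

lemma hitProb_succ {n : ℕ} (α : ℝ) (A : Finset (Fin (n + 1) → Bool)) :
    hitProb (n + 1) α A = α * hitProb n α (A.image Fin.tail) +
      (1 - α) / 2 * (hitProb n α (headSlice false A) + hitProb n α (headSlice true A)) := by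
  simp only [hitProb, sum_pi_fin_succ (M := ℝ), Fintype.sum_option, Fintype.sum_bool, restW_cons,
    hits_cons_none, hits_cons_some, mul_sum, ← sum_add_distrib]
  refine sum_congr rfl fun ρ _ => ?_
  simp only [reduceCtorEq, if_true, if_false]
  ring

lemma one_add_div_two_rpow_le {α c t : ℝ} (hα1 : α ≤ 1) (hαc : 1 - α ≤ c) (hc1 : c ≤ 1)
    (ht0 : 0 ≤ t) (ht1 : t ≤ 1) :
    ((1 + t) / 2) ^ c ≤ α + (1 - α) / 2 * (1 + t ^ c) := by
  have hc0 : 0 ≤ c := by linarith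
  have bernoulli : ((1 + t) / 2) ^ c ≤ 1 + c * ((t - 1) / 2) := by
    have h := rpow_one_add_le_one_add_mul_self (s := (t - 1) / 2) (by linarith) hc0 hc1
    rwa [show 1 + (t - 1) / 2 = (1 + t) / 2 by ring] at h
  have ht_le : t ≤ t ^ c := by
    simpa using Real.rpow_le_rpow_of_exponent_ge' ht0 ht1 hc0 hc1
  nlinarith [mul_le_mul_of_nonneg_left ht_le (by linarith : (0 : ℝ) ≤ 1 - α),
    mul_le_mul_of_nonneg_right hαc (by linarith : (0 : ℝ) ≤ 1 - t)]

lemma midpoint_rpow_le {α c p₀ p₁ H : ℝ} (hα1 : α < 1) (hαc : 1 - α ≤ c) (hc1 : c ≤ 1)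
    (hp₀ : 0 ≤ p₀) (hp₁ : 0 ≤ p₁) (hH₀ : p₀ ^ c ≤ H) (hH₁ : p₁ ^ c ≤ H) :
    ((p₀ + p₁) / 2) ^ c ≤ α * H + (1 - α) / 2 * (p₀ ^ c + p₁ ^ c) := by
  wlog hle : p₀ ≤ p₁ generalizing p₀ p₁
  · rw [add_comm p₀, add_comm (p₀ ^ c)]
    exact this hp₁ hp₀ hH₁ hH₀ (le_of_not_ge hle)
  have hα0 : 0 ≤ α := by linarith
  have hc0 : 0 < c := by linarith
  rcases hp₁.eq_or_lt with rfl | hp₁_pos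
  · obtain rfl : p₀ = 0 := le_antisymm hle hp₀
    simp only [add_zero, zero_div, Real.zero_rpow hc0.ne'] at hH₀ ⊢
    nlinarith
  obtain ⟨t, ht0, ht1, rfl⟩ : ∃ t, 0 ≤ t ∧ t ≤ 1 ∧ p₀ = p₁ * t :=
    ⟨p₀ / p₁, by positivity, div_le_one_of_le₀ hle hp₁, by field_simp⟩
  calc ((p₁ * t + p₁) / 2) ^ c = p₁ ^ c * ((1 + t) / 2) ^ c := by
        rw [← Real.mul_rpow hp₁ (by positivity)]
        ring_nf
    _ ≤ p₁ ^ c * (α + (1 - α) / 2 * (1 + t ^ c)) := by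
        gcongr
        exact one_add_div_two_rpow_le hα1.le hαc hc1 ht0 ht1
    _ = α * p₁ ^ c + (1 - α) / 2 * ((p₁ * t) ^ c + p₁ ^ c) := by
        rw [Real.mul_rpow hp₁ ht0]
        ring
    _ ≤ α * H + (1 - α) / 2 * ((p₁ * t) ^ c + p₁ ^ c) := by gcongr

theorem card_div_rpow_le_hitProb {α c : ℝ} (hα1 : α < 1) (hαc : 1 - α ≤ c) (hc1 : c ≤ 1)
    (n : ℕ) (A : Finset (Fin n → Bool)) : ((A.card : ℝ) / 2 ^ n) ^ c ≤ hitProb n α A := by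
  have hα0 : 0 ≤ α := by linarith
  have hc0 : 0 < c := by linarith
  induction n with
  | zero =>
    rcases A.eq_empty_or_nonempty with rfl | hA
    · simpa [Real.zero_rpow hc0.ne'] using hitProb_nonneg hα0 hα1.le ∅
    · rw [hitProb_zero hA]
      refine Real.rpow_le_one (by positivity) ?_ hc0.le
      simpa using card_le_univ A
  | succ n ih =>
    have hdens : (A.card : ℝ) / 2 ^ (n + 1) =
        (((headSlice false A).card : ℝ) / 2 ^ n + ((headSlice true A).card : ℝ) / 2 ^ n) / 2 := by
      rw [card_eq_card_headSlice_add A]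
      push_cast
      ring
    rw [hdens, hitProb_succ]
    refine (midpoint_rpow_le hα1 hαc hc1 (by positivity) (by positivity)
      ((ih _).trans (hitProb_mono hα0 hα1.le (headSlice_subset_image_tail false A)))
      ((ih _).trans (hitProb_mono hα0 hα1.le (headSlice_subset_image_tail true A)))).trans ?_
    gcongr <;> exact ih _

lemma qL_eq_hitProb {n m : ℕ} (C : Fin m → Term n) (α : ℝ) (i : Fin m) :
    qL C α i = hitProb n α (univ.filter fun x => DLind C x = i.val) := by
  unfold qL hitProb Hits Useful
  simp only [mem_filter, mem_univ, true_and, and_comm]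
  congr!

theorem pL_le_qL_pow_general {n m : ℕ} (C : Fin m → Term n)
    (i : Fin m) (β : ℝ) (hβ0 : 0 < β) (hβ1 : β < 1) :
    pL C i.val ≤ qL C (1 - β) i ^ ((1 + β) / (2 * β)) := by
  have hc1 : 2 * β / (1 + β) ≤ 1 := by rw [div_le_one (by linarith)]; linarith
  have hαc : 1 - (1 - β) ≤ 2 * β / (1 + β) := by rw [le_div_iff₀ (by linarith)]; nlinarith
  have hq : 0 ≤ qL C (1 - β) i :=
    qL_eq_hitProb C _ i ▸ hitProb_nonneg (by linarith) (by linarith) _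
  have key := card_div_rpow_le_hitProb (by linarith) hαc hc1 n
    (univ.filter fun x => DLind C x = i.val)
  rw [← qL_eq_hitProb] at key
  rw [pL, pr, ← inv_div (2 * β), Real.le_rpow_inv_iff_of_pos (by positivity) hq (by positivity)]
  -- `pL` filters with the classical decidability instance, `key` with `Nat.decEq`
  convert key

theorem pL_le_qL_pow {n m w : ℕ} (C : Fin m → Term n)
    (hw : ∀ j, termWidth (C j) ≤ w)
    (hm : 0 < m) (hlast : C ⟨m - 1, Nat.sub_lt hm one_pos⟩ = fun _ => none)
    (huseful : ∀ i : Fin m, ∃ x, DLind C x = i.val)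
    (i : Fin m) (β : ℝ) (hβ0 : 0 < β) (hβ1 : β < 1) :
    pL C i.val ≤ qL C (1 - β) i ^ ((1 + β) / (2 * β)) :=
  pL_le_qL_pow_general C i β hβ0 hβ1
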